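/- Let K = ∂Δ² be the boundary of the 2-simplex with vertices a, b, c (simplices: the three vertices and the three edges {a,b}, {a,c}, {b,c}). Then the discrete topological complexity TC(K) = 2. -/

import Mathlib

attribute [local instance] Classical.decEq

/-- An abstract simplicial complex on vertex set `V`. -/
structure SC (V : Type) where
  faces : Set (Finset V)
  down_closed : ∀ {σ τ : Finset V}, σ ∈ faces → τ ⊆ σ → τ.Nonempty → τ ∈ faces

/-- A vertex map inducing a simplicial map `K → L`. -/
def IsSimplicialMap {V W : Type} (K : SC V) (L : SC W) (f : V → W) : Prop :=
  ∀ σ ∈ K.faces, σ.image f ∈ L.faces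

/-- Two maps are contiguous: for each simplex, the union of images is a simplex. -/
def Contiguous {V W : Type} (K : SC V) (L : SC W) (f g : V → W) : Prop :=
  ∀ σ ∈ K.faces, σ.image f ∪ σ.image g ∈ L.faces

/-- Being in the same contiguity class: connected by a finite chain of contiguous maps. -/
def ContigClass {V W : Type} (K : SC V) (L : SC W) : (V → W) → (V → W) → Prop :=
  Relation.ReflTransGen (Contiguous K L)

/-- The categorical product of two simplicial complexes. -/
def prodSC {V W : Type} (K : SC V) (L : SC W) : SC (V × W) where
  faces := {σ | σ.image Prod.fst ∈ K.faces ∧ σ.image Prod.snd ∈ L.faces}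
  down_closed := fun hσ hτσ hne =>
    ⟨K.down_closed hσ.1 (Finset.image_subset_image hτσ) (hne.image _),
     L.down_closed hσ.2 (Finset.image_subset_image hτσ) (hne.image _)⟩

/-- `Ω` is a Farber subcomplex of `K Π K`: a subcomplex admitting a simplicial map
`s : Ω → K` with `Δ ∘ s` in the contiguity class of the inclusion. -/
def IsFarber {V : Type} (K : SC V) (Ω : SC (V × V)) : Prop :=
  Ω.faces ⊆ (prodSC K K).faces ∧
  ∃ s : V × V → V, IsSimplicialMap Ω K s ∧
    ContigClass Ω (prodSC K K) (fun p => (s p, s p)) id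

/-- `K Π K` is covered by `n + 1` Farber subcomplexes. -/
def TCle {V : Type} (K : SC V) (n : ℕ) : Prop :=
  ∃ Ω : Fin (n + 1) → SC (V × V), (∀ i, IsFarber K (Ω i)) ∧
    ∀ σ ∈ (prodSC K K).faces, ∃ i, σ ∈ (Ω i).faces

/-- Discrete topological complexity. -/
noncomputable def TCdisc {V : Type} (K : SC V) : ℕ∞ :=
  sInf {n : ℕ∞ | ∃ m : ℕ, n = (m : ℕ∞) ∧ TCle K m}

/-- A categorical subcomplex: the inclusion is in the contiguity class of a constant map
at a vertex of `K`. -/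
def IsCategorical {V : Type} (K : SC V) (L : SC V) : Prop :=
  L.faces ⊆ K.faces ∧ ∃ v : V, {v} ∈ K.faces ∧ ContigClass L K id (fun _ => v)

/-- `K` is covered by `n + 1` categorical subcomplexes. -/
def scatLe {V : Type} (K : SC V) (n : ℕ) : Prop :=
  ∃ L : Fin (n + 1) → SC V, (∀ i, IsCategorical K (L i)) ∧
    ∀ σ ∈ K.faces, ∃ i, σ ∈ (L i).faces

/-- Normalized simplicial LS-category. -/
noncomputable def scat {V : Type} (K : SC V) : ℕ∞ :=
  sInf {n : ℕ∞ | ∃ m : ℕ, n = (m : ℕ∞) ∧ scatLe K m}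

/-- The preimage subcomplex of a subcomplex `Ω` under a vertex map `f`,
inside an ambient complex `M`. -/
def preimSC {V W : Type} (M : SC W) (Ω : SC V) (f : W → V) : SC W where
  faces := {τ | τ ∈ M.faces ∧ τ.image f ∈ Ω.faces}
  down_closed := fun hσ hτσ hne =>
    ⟨M.down_closed hσ.1 hτσ hne,
     Ω.down_closed hσ.2 (Finset.image_subset_image hτσ) (hne.image _)⟩

/-- `K` and `L` have the same strong homotopy type. -/
def StrongEquiv {V W : Type} (K : SC V) (L : SC W) : Prop :=
  ∃ (φ : V → W) (ψ : W → V), IsSimplicialMap K L φ ∧ IsSimplicialMap L K ψ ∧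
    ContigClass L L (φ ∘ ψ) id ∧ ContigClass K K (ψ ∘ φ) id

/-- `K` is edge-path connected. -/
def EdgeConn {V : Type} (K : SC V) : Prop :=
  ∀ v w : V, {v} ∈ K.faces → {w} ∈ K.faces →
    Relation.ReflTransGen (fun a b => ({a, b} : Finset V) ∈ K.faces) v w

/-- `K` is strongly collapsible: the identity is in the contiguity class of a constant map. -/
def StronglyCollapsible {V : Type} (K : SC V) : Prop :=
  ∃ v : V, {v} ∈ K.faces ∧ ContigClass K K id (fun _ => v)

/-- The boundary of the 2-simplex: vertices `0, 1, 2` and the three edges. -/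
def boundaryTwoSimplex : SC (Fin 3) where
  faces := {σ | σ.Nonempty ∧ σ.card ≤ 2}
  down_closed := fun hσ hτσ hne => ⟨hne, le_trans (Finset.card_le_card hτσ) hσ.2⟩

/-!
Upper bound: `∂Δ² Π ∂Δ²` is covered by the simplices whose two projections together still span
a simplex of `∂Δ²` (a Farber subcomplex with section `Prod.fst`) and by the closed stars of the
vertices `(1, 0)` and `(0, 1)`, which deform to the diagonal vertices `(1, 1)` and `(0, 0)`.

Lower bound: contiguous maps into `∂Δ²` have the same winding number around every edge-triangle,
so on a Farber subcomplex both projections wind equally around each triangle. Among any five of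
the nine facets `e × e'` there are three whose pairwise common vertices form a triangle around
which the projections wind differently. Hence a Farber subcomplex contains at most four facets,
and two of them cannot cover all nine.
-/

namespace SC

def closedStar {W : Type} (M : SC W) (w : W) : SC W where
  faces := {σ | σ ∈ M.faces ∧ insert w σ ∈ M.faces}
  down_closed := fun hσ hτσ hne =>
    ⟨M.down_closed hσ.1 hτσ hne,
     M.down_closed hσ.2 (Finset.insert_subset_insert _ hτσ) (Finset.insert_nonempty _ _)⟩

theorem pair_mem_faces {V : Type} [DecidableEq V] (K : SC V) {σ : Finset V} (hσ : σ ∈ K.faces)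
    {p q : V} (hp : p ∈ σ) (hq : q ∈ σ) : {p, q} ∈ K.faces :=
  K.down_closed hσ (Finset.insert_subset hp (Finset.singleton_subset_iff.mpr hq))
    (Finset.insert_nonempty _ _)

end SC

theorem ContigClass.fst {U V W : Type} {L : SC U} {K : SC V} {K' : SC W} {F G : U → V × W}
    (h : ContigClass L (prodSC K K') F G) : ContigClass L K (Prod.fst ∘ F) (Prod.fst ∘ G) :=
  Relation.ReflTransGen.lift (Prod.fst ∘ ·) (fun _ _ hFG σ hσ => by
    simpa only [Finset.image_union, Finset.image_image] using (hFG σ hσ).1) _ _ h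

theorem ContigClass.snd {U V W : Type} {L : SC U} {K : SC V} {K' : SC W} {F G : U → V × W}
    (h : ContigClass L (prodSC K K') F G) : ContigClass L K' (Prod.snd ∘ F) (Prod.snd ∘ G) :=
  Relation.ReflTransGen.lift (Prod.snd ∘ ·) (fun _ _ hFG σ hσ => by
    simpa only [Finset.image_union, Finset.image_image] using (hFG σ hσ).2) _ _ h

theorem TCle.mono {V : Type} {K : SC V} {m n : ℕ} (h : TCle K m) (hmn : m ≤ n) : TCle K n := by
  obtain ⟨Ω, hΩ, hcover⟩ := h
  refine ⟨fun i => Ω ⟨min i m, by omega⟩, fun _ => hΩ _, fun σ hσ => ?_⟩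
  obtain ⟨j, hj⟩ := hcover σ hσ
  refine ⟨Fin.castLE (by omega) j, ?_⟩
  simpa [Nat.min_eq_left (Nat.lt_succ_iff.mp j.isLt)] using hj

def nearDiagonal {V : Type} (K : SC V) : SC (V × V) where
  faces := {σ | σ ∈ (prodSC K K).faces ∧ σ.image Prod.fst ∪ σ.image Prod.snd ∈ K.faces}
  down_closed := fun hσ hτσ hne =>
    ⟨(prodSC K K).down_closed hσ.1 hτσ hne,
     K.down_closed hσ.2
       (Finset.union_subset_union (Finset.image_subset_image hτσ) (Finset.image_subset_image hτσ))
       ((hne.image _).mono Finset.subset_union_left)⟩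

theorem isFarber_nearDiagonal {V : Type} (K : SC V) : IsFarber K (nearDiagonal K) := by
  refine ⟨fun _ hσ => hσ.1, Prod.fst, fun _ hσ => hσ.1.1, .single fun σ hσ => ?_⟩
  simpa [prodSC, Finset.image_union, Finset.image_image, Function.comp_def] using
    ⟨hσ.1.1, hσ.2⟩

theorem isFarber_closedStar {V : Type} {K : SC V} {a b : V} (hab : {a, b} ∈ K.faces) :
    IsFarber K ((prodSC K K).closedStar (a, b)) := by
  have ha : {a} ∈ K.faces := K.down_closed hab (by simp) (by simp)
  refine ⟨fun _ hσ => hσ.1, fun _ => a, fun σ hσ => ?_, .head (b := fun _ => (a, b))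
    (fun σ hσ => ?_) (.single fun σ hσ => ?_)⟩
  all_goals rcases σ.eq_empty_or_nonempty with rfl | hne
  · simpa [prodSC] using hσ.1.1
  · simpa [Finset.image_const hne] using ha
  · simpa using hσ.1
  · simpa [Finset.image_const hne, prodSC] using ⟨ha, hab⟩
  · simpa using hσ.1
  · simpa [Finset.image_const hne] using hσ.2

theorem mem_boundaryTwoSimplex_faces {σ : Finset (Fin 3)} :
    σ ∈ boundaryTwoSimplex.faces ↔ σ.Nonempty ∧ ∃ v, v ∉ σ := by
  have hcard : σ.card ≤ 2 ↔ σ ≠ Finset.univ := by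
    rw [← Finset.card_lt_iff_ne_univ, Fintype.card_fin]
    omega
  simp only [boundaryTwoSimplex, Set.mem_ofPred_eq, hcard, Ne, Finset.eq_univ_iff_forall,
    not_forall]

theorem mem_prodSC_boundaryTwoSimplex_faces {σ : Finset (Fin 3 × Fin 3)} :
    σ ∈ (prodSC boundaryTwoSimplex boundaryTwoSimplex).faces ↔
      σ.Nonempty ∧ ∃ a b : Fin 3, ∀ p ∈ σ, p.1 ≠ a ∧ p.2 ≠ b := by
  simp only [prodSC, Set.mem_ofPred_eq, mem_boundaryTwoSimplex_faces, Finset.image_nonempty,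
    Finset.mem_image, not_exists, not_and]
  constructor
  · rintro ⟨⟨hne, a, ha⟩, -, b, hb⟩
    exact ⟨hne, a, b, fun p hp => ⟨fun h => ha p hp h, fun h => hb p hp h⟩⟩
  · rintro ⟨hne, a, b, hab⟩
    exact ⟨⟨hne, a, fun p hp => (hab p hp).1⟩, hne, b, fun p hp => (hab p hp).2⟩

theorem mem_nearDiagonal_of_forall_ne {σ : Finset (Fin 3 × Fin 3)} (hne : σ.Nonempty) {a : Fin 3}
    (ha : ∀ p ∈ σ, p.1 ≠ a ∧ p.2 ≠ a) : σ ∈ (nearDiagonal boundaryTwoSimplex).faces := by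
  refine ⟨mem_prodSC_boundaryTwoSimplex_faces.mpr ⟨hne, a, a, ha⟩,
    mem_boundaryTwoSimplex_faces.mpr ⟨by simpa using hne, a, ?_⟩⟩
  simp only [Finset.mem_union, Finset.mem_image, not_or, not_exists, not_and]
  exact ⟨fun p hp => (ha p hp).1, fun p hp => (ha p hp).2⟩

theorem mem_closedStar_of_forall_ne {σ : Finset (Fin 3 × Fin 3)} (hne : σ.Nonempty) {a b : Fin 3}
    (hab : ∀ p ∈ σ, p.1 ≠ a ∧ p.2 ≠ b) (w : Fin 3 × Fin 3) (hw : w.1 ≠ a ∧ w.2 ≠ b) :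
    σ ∈ ((prodSC boundaryTwoSimplex boundaryTwoSimplex).closedStar w).faces := by
  refine ⟨mem_prodSC_boundaryTwoSimplex_faces.mpr ⟨hne, a, b, hab⟩,
    mem_prodSC_boundaryTwoSimplex_faces.mpr ⟨by simp, a, b, ?_⟩⟩
  simpa [hw] using hab

theorem TCle_boundaryTwoSimplex_two : TCle boundaryTwoSimplex 2 := by
  have hedge : ∀ a b : Fin 3, ({a, b} : Finset (Fin 3)) ∈ boundaryTwoSimplex.faces := fun a b =>
    ⟨Finset.insert_nonempty _ _, (Finset.card_insert_le _ _).trans (by simp)⟩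
  let K := boundaryTwoSimplex
  refine ⟨![nearDiagonal K, (prodSC K K).closedStar (1, 0), (prodSC K K).closedStar (0, 1)],
    fun i => ?_, fun σ hσ => ?_⟩
  · fin_cases i
    exacts [isFarber_nearDiagonal _, isFarber_closedStar (by convert hedge 1 0),
      isFarber_closedStar (by convert hedge 0 1)]
  obtain ⟨hne, a, b, hab⟩ := mem_prodSC_boundaryTwoSimplex_faces.mp hσ
  have hcases : ∀ a b : Fin 3, a = b ∨ (1 ≠ a ∧ 0 ≠ b) ∨ (0 ≠ a ∧ 1 ≠ b) := by decide
  rcases hcases a b with rfl | hw | hw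
  exacts [⟨0, mem_nearDiagonal_of_forall_ne hne hab⟩, ⟨1, mem_closedStar_of_forall_ne hne hab _ hw⟩,
    ⟨2, mem_closedStar_of_forall_ne hne hab _ hw⟩]

def arc (x y : Fin 3) : ℤ := if y = x then 0 else if y = x + 1 then 1 else -1

-- three times the winding number of the loop `x → y → z → x` in `∂Δ²`
def triangleWinding (x y z : Fin 3) : ℤ := arc x y + arc y z + arc z x

-- On the edge opposite `v`, `arc p q` is the height of `q` minus the height of `p`.
theorem arc_sub_arc_of_ne : ∀ v p q r s : Fin 3, p ≠ v → q ≠ v → r ≠ v → s ≠ v →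
    arc p q - arc r s = arc p r - arc q s := by
  decide

theorem Contiguous.arc_sub_arc {U : Type} [DecidableEq U] {L : SC U} {f g : U → Fin 3}
    (h : Contiguous L boundaryTwoSimplex f g) {a b : U} (hab : {a, b} ∈ L.faces) :
    arc (f a) (f b) - arc (g a) (g b) = arc (f a) (g a) - arc (f b) (g b) := by
  obtain ⟨-, v, hv⟩ := mem_boundaryTwoSimplex_faces.mp (h _ hab)
  apply arc_sub_arc_of_ne v <;> rintro rfl <;> simp at hv

theorem Contiguous.triangleWinding_eq {U : Type} [DecidableEq U] {L : SC U} {f g : U → Fin 3}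
    (h : Contiguous L boundaryTwoSimplex f g) {a b c : U} (hab : {a, b} ∈ L.faces)
    (hbc : {b, c} ∈ L.faces) (hca : {c, a} ∈ L.faces) :
    triangleWinding (f a) (f b) (f c) = triangleWinding (g a) (g b) (g c) := by
  have := h.arc_sub_arc hab
  have := h.arc_sub_arc hbc
  have := h.arc_sub_arc hca
  unfold triangleWinding
  linarith

theorem ContigClass.triangleWinding_eq {U : Type} [DecidableEq U] {L : SC U} {f g : U → Fin 3}
    (h : ContigClass L boundaryTwoSimplex f g) {a b c : U} (hab : {a, b} ∈ L.faces)
    (hbc : {b, c} ∈ L.faces) (hca : {c, a} ∈ L.faces) :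
    triangleWinding (f a) (f b) (f c) = triangleWinding (g a) (g b) (g c) := by
  induction h with
  | refl => rfl
  | tail _ hstep ih => exact ih.trans (hstep.triangleWinding_eq hab hbc hca)

theorem IsFarber.triangleWinding_fst_eq_snd {Ω : SC (Fin 3 × Fin 3)}
    (hΩ : IsFarber boundaryTwoSimplex Ω) {p q r : Fin 3 × Fin 3} (hpq : {p, q} ∈ Ω.faces)
    (hqr : {q, r} ∈ Ω.faces) (hrp : {r, p} ∈ Ω.faces) :
    triangleWinding p.1 q.1 r.1 = triangleWinding p.2 q.2 r.2 := by
  obtain ⟨-, s, -, hs⟩ := hΩ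
  calc triangleWinding p.1 q.1 r.1 = triangleWinding (s p) (s q) (s r) :=
        (hs.fst.triangleWinding_eq hpq hqr hrp).symm
    _ = triangleWinding p.2 q.2 r.2 := hs.snd.triangleWinding_eq hpq hqr hrp

-- `facet (a, b)` is the product of the edges opposite `a` and `b`
def facet (i : Fin 3 × Fin 3) : Finset (Fin 3 × Fin 3) :=
  Finset.univ.filter fun p => p.1 ≠ i.1 ∧ p.2 ≠ i.2

def third (x y : Fin 3) : Fin 3 := if x = y then x + 1 else -(x + y)

theorem third_ne : ∀ x y : Fin 3, third x y ≠ x ∧ third x y ≠ y := by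
  decide

def corner (i j : Fin 3 × Fin 3) : Fin 3 × Fin 3 := (third i.1 j.1, third i.2 j.2)

theorem corner_mem_facet_left (i j : Fin 3 × Fin 3) : corner i j ∈ facet i := by
  simp [facet, corner, (third_ne _ _).1]

theorem corner_mem_facet_right (i j : Fin 3 × Fin 3) : corner i j ∈ facet j := by
  simp [facet, corner, (third_ne _ _).2]

theorem facet_mem_faces (i : Fin 3 × Fin 3) :
    facet i ∈ (prodSC boundaryTwoSimplex boundaryTwoSimplex).faces :=
  mem_prodSC_boundaryTwoSimplex_faces.mpr
    ⟨⟨_, corner_mem_facet_left i i⟩, i.1, i.2, fun p hp => by simpa [facet] using hp⟩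

-- A coordinate of the corner triangle of `i, j, k` winds exactly when that coordinate takes all
-- three values on `i, j, k`, and then in their cyclic order: among any five cells of the 3 × 3
-- grid there are three whose rows and columns are not in the same cyclic order.
set_option maxRecDepth 10000 in
theorem exists_triangleWinding_corner_ne : ∀ S : Finset (Fin 3 × Fin 3), 5 ≤ S.card →
    ∃ i ∈ S, ∃ j ∈ S, ∃ k ∈ S, triangleWinding (corner k i).1 (corner i j).1 (corner j k).1 ≠
      triangleWinding (corner k i).2 (corner i j).2 (corner j k).2 := by
  decide

theorem IsFarber.card_le_four {Ω : SC (Fin 3 × Fin 3)} (hΩ : IsFarber boundaryTwoSimplex Ω)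
    {S : Finset (Fin 3 × Fin 3)} (hS : ∀ i ∈ S, facet i ∈ Ω.faces) : S.card ≤ 4 := by
  by_contra! h
  obtain ⟨i, hi, j, hj, k, hk, hne⟩ := exists_triangleWinding_corner_ne S h
  exact hne (hΩ.triangleWinding_fst_eq_snd
    (Ω.pair_mem_faces (hS i hi) (corner_mem_facet_right k i) (corner_mem_facet_left i j))
    (Ω.pair_mem_faces (hS j hj) (corner_mem_facet_right i j) (corner_mem_facet_left j k))
    (Ω.pair_mem_faces (hS k hk) (corner_mem_facet_right j k) (corner_mem_facet_left k i)))

theorem not_TCle_boundaryTwoSimplex_one : ¬ TCle boundaryTwoSimplex 1 := by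
  classical
  rintro ⟨Ω, hΩ, hcover⟩
  let S (j : Fin 2) := Finset.univ.filter fun i => facet i ∈ (Ω j).faces
  have hunion : Finset.univ = S 0 ∪ S 1 := by
    ext i
    simpa [S, Fin.exists_fin_two] using hcover _ (facet_mem_faces i)
  have h0 := (hΩ 0).card_le_four (S := S 0) (by simp [S])
  have h1 := (hΩ 1).card_le_four (S := S 1) (by simp [S])
  have h9 := Finset.card_union_le (S 0) (S 1)
  rw [← hunion, Finset.card_univ, Fintype.card_prod, Fintype.card_fin] at h9
  omega

theorem TCdisc_boundaryTwoSimplex : TCdisc boundaryTwoSimplex = 2 := by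
  refine le_antisymm (sInf_le ⟨2, rfl, TCle_boundaryTwoSimplex_two⟩) (le_sInf ?_)
  rintro _ ⟨m, rfl, hm⟩
  have : 2 ≤ m := by
    by_contra! hlt
    exact not_TCle_boundaryTwoSimplex_one (hm.mono (by omega))
  exact_mod_cast this
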